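/- Let κ ≥ 2^{ℵ₁} be a regular cardinal and let Φ be a function from the collection of subsets of H_κ of cardinality 2^{ℵ₁} into the nonstationary ideal on ω₁ (i.e., Φ(X) is a non-stationary subset of ω₁ for each X). Then there exists a closed unbounded set C ⊆ ω₁ and a set S of subsets of H_κ of size 2^{ℵ₁} which is *-stationary (meaning: for every structure 𝔐 of finite type with universe H_κ there is X ∈ S closed under ω-sequences with (X;...) ≺ 𝔐), such that C ∩ Φ(X) = ∅ for every X ∈ S. -/

import Mathlib

open Cardinal Set FirstOrder

noncomputable section

/-- The first uncountable ordinal. -/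
def omega1 : Ordinal := (Cardinal.aleph 1).ord

/-- `C` is a closed unbounded subset of the ordinal `κ`. -/
def IsClubIn (C : Set Ordinal) (κ : Ordinal) : Prop :=
  C ⊆ Set.Iio κ ∧ (∀ a < κ, ∃ b ∈ C, a < b) ∧
    ∀ s : Set Ordinal, s ⊆ C → s.Nonempty → sSup s < κ → sSup s ∈ C

/-- `S` is a stationary subset of the ordinal `κ`: it meets every club. -/
def IsStationaryIn (S : Set Ordinal) (κ : Ordinal) : Prop :=
  S ⊆ Set.Iio κ ∧ ∀ C : Set Ordinal, IsClubIn C κ → (S ∩ C).Nonempty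

/-- A language of finite type: finitely many function and relation symbols. -/
def FinType (L : FirstOrder.Language.{0, 0}) : Prop :=
  Finite (Σ n, L.Functions n) ∧ Finite (Σ n, L.Relations n)

/-- `X` is closed under `ω`-sequences, where `code` is the (fixed) coding of
`ω`-sequences of elements of `H` as elements of `H` (abstracting `H = H_κ`). -/
def OmClosed {H : Type} (code : (ℕ → H) → H) (X : Set H) : Prop :=
  ∀ f : ℕ → H, (∀ n, f n ∈ X) → code f ∈ X

/-- `S` is `*`-stationary: for every structure `𝔐` of finite type with universe `H`
there is `X ∈ S` with `^ωX ⊆ X` which is the universe of an elementary substructure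
of `𝔐`. -/
def StarStationary {H : Type} (code : (ℕ → H) → H) (S : Set (Set H)) : Prop :=
  ∀ L : FirstOrder.Language.{0, 0}, FinType L → ∀ [L.Structure H],
    ∃ X ∈ S, OmClosed code X ∧ ∃ E : L.ElementarySubstructure H, (E : Set H) = X

/-!
Suppose not. Then every club `C ⊆ ω₁` has a structure `𝔐_C` of finite type in which no
`ω`-closed elementary substructure `X` of size `2^ℵ₁` has `C ∩ Φ(X) = ∅`. There are only
`2^ℵ₁` clubs, each `𝔐_C` has countably many Skolem functions, and `(2^ℵ₁)^ℵ₀ = 2^ℵ₁`, so some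
`X` of size `2^ℵ₁` is closed under `ω`-sequences and under all these Skolem functions, hence
elementary in every `𝔐_C`. As `Φ(X)` is nonstationary it misses some club `C`, and `X`
contradicts the choice of `𝔐_C`.
-/

universe u v

abbrev OmegaTerm (σ : Type v) (J : Type u) : Type (max v u) :=
  WType (Sum.elim (fun _ : σ => Empty) (fun _ : J => ℕ))

def OmegaTerm.eval {σ : Type v} {J : Type u} {H : Type*} (base : σ → H)
    (G : J → (ℕ → H) → H) : OmegaTerm σ J → H
  | ⟨Sum.inl s, _⟩ => base s
  | ⟨Sum.inr j, t⟩ => G j fun n => eval base G (t n)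

theorem OmegaTerm.lift_mk_le {σ : Type v} {J : Type u} {μ : Cardinal.{max v u}}
    (hμ : ℵ₀ ≤ μ) (hpow : μ ^ ℵ₀ = μ) (hσ : lift.{u} #σ ≤ μ) (hJ : lift.{v} #J ≤ μ) :
    #(OmegaTerm σ J) ≤ μ := by
  refine WType.cardinalMk_le_of_le' ?_
  calc (sum fun a : σ ⊕ J =>
        μ ^ lift.{max v u} #(Sum.elim (fun _ : σ => Empty) (fun _ : J => ℕ) a))
      ≤ sum fun _ : σ ⊕ J => μ := by
        refine sum_le_sum _ _ fun a => ?_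
        cases a with
        | inl s => simpa using one_le_aleph0.trans hμ
        | inr j => simp [hpow]
    _ ≤ μ := by
        rw [sum_const, mk_sum, lift_id, lift_id]
        calc (lift.{u} #σ + lift.{v} #J) * μ ≤ (μ + μ) * μ := by gcongr
          _ = μ := by rw [add_eq_self hμ, mul_eq_self hμ]

theorem exists_card_eq_forall_mem_of_omega_ops {H : Type v} {J : Type u} {μ : Cardinal.{v}}
    (hμ : ℵ₀ ≤ μ) (hpow : μ ^ ℵ₀ = μ) (hJ : lift.{v} #J ≤ lift.{u} μ) (hμH : μ ≤ #H)
    (G : J → (ℕ → H) → H) :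
    ∃ X : Set H, #X = μ ∧ ∀ j f, (∀ n, f n ∈ X) → G j f ∈ X := by
  obtain ⟨s, hs⟩ := le_mk_iff_exists_set.1 hμH
  set X := range (OmegaTerm.eval (J := J) ((↑) : s → H) G)
  have hsX : s ⊆ X := fun x hx => ⟨⟨Sum.inl ⟨x, hx⟩, Empty.elim⟩, rfl⟩
  refine ⟨X, le_antisymm ?_ (hs ▸ mk_le_mk_of_subset hsX), fun j f hf => ?_⟩
  · have h1 := mk_range_le_lift (f := OmegaTerm.eval (J := J) ((↑) : s → H) G)
    have h2 := OmegaTerm.lift_mk_le (σ := s) (J := J) (μ := lift.{u} μ) (by simpa using hμ)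
      (by rw [← lift_aleph0.{u}, ← lift_power, hpow]) (by rw [hs]) hJ
    rw [← lift_le.{u}]
    calc lift.{u} #X = lift.{max v u} #X := (congrFun lift_umax.{v, u} _).symm
      _ ≤ lift.{v} #(OmegaTerm s J) := h1
      _ = #(OmegaTerm s J) := lift_id'.{v, u} _
      _ ≤ lift.{u} μ := h2
  · choose t ht using hf
    exact ⟨⟨Sum.inr j, t⟩, congrArg (G j) (funext ht)⟩

theorem two_power_power_aleph0 {a : Cardinal} (ha : ℵ₀ ≤ a) :
    ((2 : Cardinal) ^ a) ^ ℵ₀ = 2 ^ a := by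
  rw [← power_mul, mul_eq_left ha ha aleph0_ne_zero]

theorem exists_isClubIn_inter_eq_empty {S : Set Ordinal} {o : Ordinal} (hS : S ⊆ Iio o)
    (h : ¬IsStationaryIn S o) : ∃ C, IsClubIn C o ∧ C ∩ S = ∅ := by
  simp only [IsStationaryIn, hS, true_and, not_forall, not_nonempty_iff_eq_empty] at h
  obtain ⟨C, hC, hSC⟩ := h
  exact ⟨C, hC, by rwa [inter_comm]⟩

theorem mk_isClubIn_le (o : Ordinal.{u}) :
    #{C : Set Ordinal.{u} // IsClubIn C o} ≤ 2 ^ lift.{u + 1} o.card := by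
  have hinj : Function.Injective fun C : {C : Set Ordinal.{u} // IsClubIn C o} =>
      ((↑) ⁻¹' C.1 : Set (Iio o)) := by
    rintro ⟨C, hC⟩ ⟨D, hD⟩ h
    rw [Subtype.preimage_coe_eq_preimage_coe_iff, inter_eq_right.2 hC.1,
      inter_eq_right.2 hD.1] at h
    exact Subtype.ext h
  simpa [mk_Iio_ordinal] using mk_le_of_injective hinj

theorem FinType.mk_functions_sum_skolem₁_le {L : FirstOrder.Language.{0, 0}} (hL : FinType L) :
    #(Σ n, (L.sum L.skolem₁).Functions n) ≤ ℵ₀ := by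
  obtain ⟨_, _⟩ := hL
  refine Language.card_functions_sum_skolem₁_le.trans (max_le le_rfl ?_)
  have : Finite L.Symbols := inferInstanceAs (Finite (_ ⊕ _))
  exact mk_le_aleph0

theorem exists_extend_mem {H : Type*} {X : Set H} (hX : X.Nonempty) {n : ℕ} {x : Fin n → H}
    (hx : ∀ i, x i ∈ X) : ∃ f : ℕ → H, (∀ k, f k ∈ X) ∧ (fun i : Fin n => f i) = x := by
  refine ⟨Function.extend Fin.val x fun _ => hX.some, fun k => ?_,
    funext fun i => Fin.val_injective.extend_apply _ _ i⟩
  rw [Function.extend_def]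
  split_ifs
  exacts [hx _, hX.some_mem]

theorem exists_omClosed_elementarySubstructures {H : Type} {I : Type u} (code : (ℕ → H) → H)
    (L : I → FirstOrder.Language.{0, 0}) (hL : ∀ i, FinType (L i))
    (𝔐 : ∀ i, (L i).Structure H) {μ : Cardinal.{0}} (hμ : ℵ₀ ≤ μ) (hpow : μ ^ ℵ₀ = μ)
    (hI : #I ≤ lift.{u} μ) (hμH : μ ≤ #H) :
    ∃ X : Set H, #X = μ ∧ OmClosed code X ∧
      ∀ i, ∃ E : @Language.ElementarySubstructure (L i) H (𝔐 i), (E : Set H) = X := by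
  have : Nonempty H := mk_ne_zero_iff.1 (aleph0_pos.trans_le (hμ.trans hμH)).ne'
  -- an `n`-ary Skolem function acts as an `ω`-ary operation on the first `n` arguments
  let G : Option (Σ i, Σ n, ((L i).sum (L i).skolem₁).Functions n) → (ℕ → H) → H
    | none, f => code f
    | some ⟨i, n, F⟩, f => letI := 𝔐 i; Language.Structure.funMap F fun k : Fin n => f k
  have hJ : lift.{0} #(Option (Σ i, Σ n, ((L i).sum (L i).skolem₁).Functions n)) ≤
      lift.{u} μ := by
    have hμ' : ℵ₀ ≤ lift.{u} μ := by simpa using hμ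
    have hsum : (sum fun i => #(Σ n, ((L i).sum (L i).skolem₁).Functions n)) ≤ lift.{u} μ :=
      calc _ ≤ sum fun _ : I => ℵ₀ := sum_le_sum _ _ fun i => (hL i).mk_functions_sum_skolem₁_le
        _ = #I * ℵ₀ := by simp
        _ ≤ lift.{u} μ * lift.{u} μ := mul_le_mul' hI hμ'
        _ = lift.{u} μ := mul_eq_self hμ'
    rw [lift_uzero, mk_option, mk_sigma]
    calc _ ≤ lift.{u} μ + lift.{u} μ := add_le_add hsum (one_le_aleph0.trans hμ')
      _ = lift.{u} μ := add_eq_self hμ'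
  obtain ⟨X, hXμ, hX⟩ := exists_card_eq_forall_mem_of_omega_ops hμ hpow hJ hμH G
  have hXne : X.Nonempty :=
    nonempty_coe_sort.1 (mk_ne_zero_iff.1 (hXμ ▸ (aleph0_pos.trans_le hμ).ne'))
  refine ⟨X, hXμ, fun f hf => hX none f hf, fun i => ?_⟩
  let := 𝔐 i
  refine ⟨Language.Substructure.elementarySkolem₁Reduct ⟨X, fun {n} F x hx => ?_⟩, rfl⟩
  obtain ⟨f, hf, rfl⟩ := exists_extend_mem hXne hx
  exact hX (some ⟨i, n, F⟩) f hf

theorem exists_isClubIn_starStationary {H : Type} (hH : 2 ^ ℵ₁ ≤ #H) (code : (ℕ → H) → H)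
    (Φ : Set H → Set Ordinal.{u})
    (hΦ : ∀ X : Set H, #X = 2 ^ ℵ₁ → Φ X ⊆ Iio omega1 ∧ ¬IsStationaryIn (Φ X) omega1) :
    ∃ C, IsClubIn C omega1 ∧ StarStationary code {X | #X = 2 ^ ℵ₁ ∧ C ∩ Φ X = ∅} := by
  by_contra! hbad
  simp only [StarStationary, not_forall, not_exists, not_and] at hbad
  choose L hL 𝔐 hX using hbad
  have hI : #{C : Set Ordinal.{u} // IsClubIn C omega1} ≤
      lift.{u + 1} (2 ^ ℵ₁ : Cardinal.{0}) := by
    simpa [omega1] using mk_isClubIn_le omega1.{u}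
  have hclosed := exists_omClosed_elementarySubstructures code
    (fun C => L C.1 C.2) (fun C => hL C.1 C.2) (fun C => 𝔐 C.1 C.2)
    (aleph0_le_aleph 1 |>.trans (cantor _).le) (two_power_power_aleph0 (aleph0_le_aleph 1)) hI hH
  obtain ⟨X, hXμ, hXcl, hXE⟩ := hclosed
  obtain ⟨C, hC, hCX⟩ := exists_isClubIn_inter_eq_empty (hΦ X hXμ).1 (hΦ X hXμ).2
  obtain ⟨E, hE⟩ := hXE ⟨C, hC⟩
  exact hX C hC X ⟨hXμ, hCX⟩ hXcl E hE

theorem stmt0_general (κ : Cardinal) (hκ : 2 ^ Cardinal.aleph 1 ≤ κ)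
    (H : Type) (hH : Cardinal.mk H = κ) (code : (ℕ → H) → H)
    (Φ : Set H → Set Ordinal)
    (hΦ : ∀ X : Set H, Cardinal.mk X = 2 ^ Cardinal.aleph 1 →
      Φ X ⊆ Set.Iio omega1 ∧ ¬ IsStationaryIn (Φ X) omega1) :
    ∃ (C : Set Ordinal) (S : Set (Set H)),
      IsClubIn C omega1 ∧
      (∀ X ∈ S, Cardinal.mk X = 2 ^ Cardinal.aleph 1) ∧
      StarStationary code S ∧
      ∀ X ∈ S, C ∩ Φ X = ∅ := by
  obtain ⟨C, hC, hS⟩ := exists_isClubIn_starStationary (hH ▸ hκ) code Φ hΦ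
  exact ⟨C, _, hC, fun X hX => hX.1, hS, fun X hX => hX.2⟩

/-- Lemma 1 (key lemma) of the paper: if `κ ≥ 2^{ℵ₁}` is regular and
`Φ : [H_κ]^{2^{ℵ₁}} → NS_{ω₁}`, then there are a club `C ⊆ ω₁` and a `*`-stationary
set `S` of subsets of `H_κ` of size `2^{ℵ₁}` with `C ∩ Φ(X) = ∅` for all `X ∈ S`.
Here `H` abstracts `H_κ` (a set of cardinality `κ` closed under `ω`-sequences, as
witnessed by the coding function `code`). -/
theorem stmt0 (κ : Cardinal) (hreg : κ.IsRegular) (hκ : 2 ^ Cardinal.aleph 1 ≤ κ)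
    (H : Type) (hH : Cardinal.mk H = κ) (code : (ℕ → H) → H)
    (Φ : Set H → Set Ordinal)
    (hΦ : ∀ X : Set H, Cardinal.mk X = 2 ^ Cardinal.aleph 1 →
      Φ X ⊆ Set.Iio omega1 ∧ ¬ IsStationaryIn (Φ X) omega1) :
    ∃ (C : Set Ordinal) (S : Set (Set H)),
      IsClubIn C omega1 ∧
      (∀ X ∈ S, Cardinal.mk X = 2 ^ Cardinal.aleph 1) ∧
      StarStationary code S ∧
      ∀ X ∈ S, C ∩ Φ X = ∅ :=
  stmt0_general κ hκ H hH code Φ hΦ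

end
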